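/- arXiv:2510.11105 — 5 statements merged into one kernel-verified Lean document; each statement's English description precedes it below -/
import Mathlib

section
/- The Sibuya probabilities satisfy the asymptotic p_n ~ α n^{-(α+1)}/Γ(1-α) as n → ∞, i.e., p_n · n^{α+1} → α/Γ(1-α). -/
/-- Rising factorial `[a]_b = a(a+1)⋯(a+b-1)`. -/
noncomputable def riseFact (a : ℝ) (b : ℕ) : ℝ :=
  ∏ j ∈ Finset.range b, (a + j)

/-!
Gauss's product formula `Γ(a) = lim n^a n! / [a]_{n+1}` (Mathlib's `Real.GammaSeq`) gives
`[a]_n n^{1-a} / n! → 1/Γ(a)`. Since `p_n n^{α+1} = α · [1-α]_n n^α / n! · n/(n-α)`, the case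
`a = 1 - α` yields the limit `α/Γ(1-α)`.
-/

open Filter Topology

lemma riseFact_succ (a : ℝ) (n : ℕ) : riseFact a (n + 1) = riseFact a n * (a + n) :=
  Finset.prod_range_succ _ _

lemma Real.GammaSeq_eq_div_riseFact (s : ℝ) (n : ℕ) :
    Real.GammaSeq s n = (n : ℝ) ^ s * n.factorial / riseFact s (n + 1) :=
  rfl

lemma tendsto_riseFact_mul_rpow_div_factorial {a : ℝ} (ha : 0 < a) :
    Tendsto (fun n : ℕ => riseFact a n * (n : ℝ) ^ (1 - a) / n.factorial) atTop
      (𝓝 (Real.Gamma a)⁻¹) := by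
  have hlim : Tendsto (fun n : ℕ => (n : ℝ) / (n + a) / Real.GammaSeq a n) atTop
      (𝓝 (1 / Real.Gamma a)) :=
    (tendsto_natCast_div_add_atTop a).div (Real.GammaSeq_tendsto_Gamma a)
      (Real.Gamma_pos_of_pos ha).ne'
  rw [one_div] at hlim
  refine hlim.congr' ?_
  filter_upwards [eventually_gt_atTop 0] with n hn
  have hn' : (0 : ℝ) < n := Nat.cast_pos.mpr hn
  have hrise : 0 < riseFact a n :=
    Finset.prod_pos fun j _ => by positivity
  rw [Real.GammaSeq_eq_div_riseFact, riseFact_succ, Real.rpow_sub hn', Real.rpow_one]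
  have : (0 : ℝ) < (n : ℝ) ^ a := Real.rpow_pos_of_pos hn' a
  field_simp
  ring

/-- p_n · n^{α+1} → α/Γ(1-α) as n → ∞, where
p_n = α·[1-α]_{n-1}/n!. -/
theorem sibuya_tail_asymptotics (α : ℝ) (hα : α ∈ Set.Ioo (0:ℝ) 1)
    (p : ℕ → ℝ) (hp : ∀ n, 1 ≤ n → p n = α * riseFact (1 - α) (n - 1) / n.factorial) :
    Filter.Tendsto (fun n : ℕ => p n * (n : ℝ) ^ (α + 1)) Filter.atTop
      (nhds (α / Real.Gamma (1 - α))) := by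
  have hlim := (tendsto_const_nhds (x := α)).mul
    ((tendsto_riseFact_mul_rpow_div_factorial (sub_pos.mpr hα.2)).mul
      (tendsto_natCast_div_add_atTop (-α)))
  rw [mul_one, ← div_eq_mul_inv] at hlim
  refine hlim.congr' ?_
  filter_upwards [eventually_ge_atTop 1] with n hn
  obtain ⟨m, rfl⟩ := Nat.exists_eq_add_of_le' hn
  have hm : (0 : ℝ) < 1 - α + m := by linarith [hα.2, (m.cast_nonneg : (0 : ℝ) ≤ m)]
  have hshift : (m : ℝ) + 1 + -α = 1 - α + m := by ring
  rw [hp _ hn, Nat.add_sub_cancel, riseFact_succ, sub_sub_cancel,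
    Real.rpow_add_one (by positivity)]
  push_cast
  rw [hshift]
  field_simp
end

section
/- For α ∈ (0,1) and n ≥ 1, (1/n)·[z^{n-1}]((z/(1-(1-z)^{1/α}))^n) = α·[1-α]_{n-1}/n!. -/
/-- The `n`-th Taylor coefficient at `0` of a real function. -/
noncomputable def taylorCoeff (f : ℝ → ℝ) (n : ℕ) : ℝ :=
  iteratedDeriv n f 0 / n.factorial

/-- The branching mechanism φ(z) = z/(1-(1-z)^{1/α}), analytically extended by
φ(0) = α. -/
noncomputable def sibuyaPhi (α : ℝ) (z : ℝ) : ℝ :=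
  if z = 0 then α else z / (1 - (1 - z) ^ (1/α))

/-!
Put `g z = z / φ z = 1 - (1 - z)^(1/α)`. Its local inverse at `0` is the Sibuya generating
function `G w = 1 - (1 - w)^α`, and differentiating `(1 - w)^α` gives
`[w^n] G = α [1-α]_{n-1} / n!`. Lagrange inversion `(1/n) [z^(n-1)] φ^n = [w^n] G` is proved by
residues: on a small circle `z^(-n) φ(z)^n = g^(-n) G'(g) g'`, and after expanding `G'` to order
`n - 1` with an analytic remainder every term is an exact derivative or holomorphic, except
`[w^(n-1)] G' · g'/g`, whose integral is `2πi [w^(n-1)] G'` because `g` has a simple zero at `0`.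
On the real axis the real Taylor coefficient is the real part of the complex one.
-/

open Complex Metric Set Filter Topology
open scoped Real

section Taylor

variable {𝕜 E : Type*} [NontriviallyNormedField 𝕜] [NormedAddCommGroup E] [NormedSpace 𝕜 E]

theorem AnalyticOnNhd.dslope {f : 𝕜 → E} {s : Set 𝕜} (hf : AnalyticOnNhd 𝕜 f s) (a : 𝕜) :
    AnalyticOnNhd 𝕜 (_root_.dslope f a) s := by
  intro b hb
  rcases eq_or_ne b a with rfl | hba
  · obtain ⟨p, hp⟩ := hf b hb
    exact hp.has_fpower_series_dslope_fslope.analyticAt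
  · have hslope : (fun z => (z - a)⁻¹ • (f z - f a)) =ᶠ[𝓝 b] _root_.dslope f a := by
      filter_upwards [isOpen_ne.mem_nhds hba] with z hz
      rw [dslope_of_ne _ hz, slope_def_module]
    refine AnalyticAt.congr ?_ hslope
    exact ((analyticAt_id.sub analyticAt_const).inv (sub_ne_zero.2 hba)).smul
      ((hf b hb).sub analyticAt_const)

theorem AnalyticOnNhd.exists_eq_sum_add_pow_mul [CharZero 𝕜] [CompleteSpace E] {f : 𝕜 → E}
    {s : Set 𝕜} (hf : AnalyticOnNhd 𝕜 f s) (h0 : 0 ∈ s) (n : ℕ) :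
    ∃ F : 𝕜 → E, AnalyticOnNhd 𝕜 F s ∧ ∀ z,
      f z = (∑ i ∈ .range n, (z ^ i / i.factorial) • iteratedDeriv i f 0) + z ^ n • F z := by
  obtain ⟨F, hF0, hF⟩ := (hf 0 h0).exists_eq_sum_add_pow_mul n
  refine ⟨F, fun w hw => ?_, hF⟩
  rcases eq_or_ne w 0 with rfl | hw0
  · exact hF0
  have hquot : (fun z => (z ^ n)⁻¹ •
      (f z - ∑ i ∈ .range n, (z ^ i / i.factorial) • iteratedDeriv i f 0)) =ᶠ[𝓝 w] F := by
    filter_upwards [isOpen_ne.mem_nhds hw0] with z hz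
    rw [hF z, add_sub_cancel_left, inv_smul_smul₀ (pow_ne_zero _ hz)]
  refine AnalyticAt.congr ?_ hquot
  refine ((analyticAt_id.pow n).inv (pow_ne_zero _ hw0)).smul ((hf w hw).sub ?_)
  exact Finset.analyticAt_fun_sum _ fun i _ => by fun_prop

theorem mul_dslope_zero_eq_of_apply_zero {g : 𝕜 → 𝕜} (hg0 : g 0 = 0) (z : 𝕜) :
    z * dslope g 0 z = g z := by
  simpa using sub_smul_dslope_of_zero hg0 z

theorem apply_ne_zero_of_dslope_ne_zero {g : 𝕜 → 𝕜} (hg0 : g 0 = 0) {z : 𝕜} (hz : z ≠ 0)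
    (hu : dslope g 0 z ≠ 0) : g z ≠ 0 :=
  mul_dslope_zero_eq_of_apply_zero hg0 z ▸ mul_ne_zero hz hu

theorem sum_pow_mul_add_pow_mul_mul_div_pow {K : Type*} [Field K] {w : K} (hw : w ≠ 0)
    (a : ℕ → K) (R d : K) (m : ℕ) :
    (∑ i ∈ Finset.range (m + 1), w ^ i * a i + w ^ (m + 1) * R) * d / w ^ (m + 1)
      = ∑ i ∈ Finset.range m, a i * (w ^ ((i : ℤ) - (m + 1)) * d) + a m * (d / w) + R * d := by
  have hzpow : ∀ i : ℕ, w ^ ((i : ℤ) - (m + 1)) = w ^ i / w ^ (m + 1) := fun i => by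
    rw [zpow_sub₀ hw, zpow_natCast, ← Nat.cast_succ, zpow_natCast, div_eq_mul_inv]
  rw [Finset.sum_range_succ, add_mul, add_mul, add_div, add_div, Finset.sum_mul, Finset.sum_div]
  congr 1
  · congr 1
    · refine Finset.sum_congr rfl fun i _ => ?_
      rw [hzpow]
      field_simp
    · field_simp
      ring
  · field_simp

end Taylor

section Residue

variable {c : ℂ} {ρ r : ℝ}

theorem AnalyticOnNhd.circleIntegral_eq_zero {E : Type*} [NormedAddCommGroup E] [NormedSpace ℂ E]
    [CompleteSpace E] {f : ℂ → E} (hf : AnalyticOnNhd ℂ f (ball c ρ))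
    (hr : 0 ≤ r) (hrρ : r < ρ) : ∮ z in C(c, r), f z = 0 :=
  ((hf.differentiableOn.mono (closedBall_subset_ball hrρ)).mono
    closure_ball_subset_closedBall).diffContOnCl.circleIntegral_eq_zero hr

theorem circleIntegrable_of_forall_analyticAt {f : ℂ → ℂ} (hr : 0 ≤ r)
    (hf : ∀ z ∈ sphere c r, AnalyticAt ℂ f z) : CircleIntegrable f c r :=
  ContinuousOn.circleIntegrable hr fun z hz => (hf z hz).continuousAt.continuousWithinAt

theorem circleIntegral_zpow_mul_deriv_eq_zero {g : ℂ → ℂ} {k : ℤ} (hk : k ≠ -1) (hr : 0 ≤ r)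
    (hg : ∀ z ∈ sphere c r, DifferentiableAt ℂ g z) (hg0 : ∀ z ∈ sphere c r, g z ≠ 0) :
    ∮ z in C(c, r), g z ^ k * deriv g z = 0 := by
  have hk1 : ((k + 1 : ℤ) : ℂ) ≠ 0 := by exact_mod_cast (by omega : k + 1 ≠ 0)
  refine circleIntegral.integral_eq_zero_of_hasDerivWithinAt hr
    (f := fun z => g z ^ (k + 1) / ((k + 1 : ℤ) : ℂ)) fun z hz => ?_
  have hd : HasDerivAt (fun z => g z ^ (k + 1) / ((k + 1 : ℤ) : ℂ))
      (((k + 1 : ℤ) : ℂ) * g z ^ (k + 1 - 1) * deriv g z / ((k + 1 : ℤ) : ℂ)) z :=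
    ((hasDerivAt_zpow (k + 1) (g z) (Or.inl (hg0 z hz))).comp z
      (hg z hz).hasDerivAt).div_const _
  convert hd.hasDerivWithinAt using 1
  rw [add_sub_cancel_right]
  field_simp

/-- The argument principle for a simple zero at the centre of the circle. -/
theorem circleIntegral_deriv_div_self {g : ℂ → ℂ} (hg : AnalyticOnNhd ℂ g (ball 0 ρ))
    (hg0 : g 0 = 0) (hu : ∀ z ∈ ball 0 ρ, dslope g 0 z ≠ 0) (hr : 0 < r) (hrρ : r < ρ) :
    ∮ z in C(0, r), deriv g z / g z = 2 * π * I := by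
  set u := dslope g 0
  have hua : AnalyticOnNhd ℂ u (ball 0 ρ) := hg.dslope 0
  have hgu : g = fun z => z * u z :=
    funext fun z => (mul_dslope_zero_eq_of_apply_zero hg0 z).symm
  have hsph : ∀ z ∈ sphere (0 : ℂ) r, z ∈ ball (0 : ℂ) ρ ∧ z ≠ 0 := fun z hz =>
    ⟨sphere_subset_ball hrρ hz, ne_of_mem_sphere hz hr.ne'⟩
  have hsplit : EqOn (fun z => deriv g z / g z) (fun z => z⁻¹ + deriv u z / u z)
      (sphere 0 r) := by
    intro z hz
    obtain ⟨hzρ, hz0⟩ := hsph z hz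
    have hd : deriv g z = u z + z * deriv u z := by
      rw [hgu]
      simpa using ((hasDerivAt_id' z).fun_mul (hua z hzρ).differentiableAt.hasDerivAt).deriv
    simp only
    rw [hd, hgu]
    field_simp [hu z hzρ]
  have hlog : AnalyticOnNhd ℂ (fun z => deriv u z / u z) (ball 0 ρ) := fun z hz =>
    (hua.deriv z hz).div (hua z hz) (hu z hz)
  rw [circleIntegral.integral_congr hr.le hsplit, circleIntegral.integral_add,
    hlog.circleIntegral_eq_zero hr.le hrρ, add_zero]
  · simpa using circleIntegral.integral_sub_center_inv (0 : ℂ) hr.ne'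
  · exact circleIntegrable_of_forall_analyticAt hr.le fun z hz => analyticAt_inv (hsph z hz).2
  · exact circleIntegrable_of_forall_analyticAt hr.le fun z hz => hlog z (hsph z hz).1

theorem circleIntegral_comp_mul_deriv_div_pow {g H : ℂ → ℂ} {S : Set ℂ}
    (hg : AnalyticOnNhd ℂ g (ball 0 ρ)) (hg0 : g 0 = 0) (hu : ∀ z ∈ ball 0 ρ, dslope g 0 z ≠ 0)
    (hH : AnalyticOnNhd ℂ H S) (hgS : MapsTo g (ball 0 ρ) S) (hr : 0 < r) (hrρ : r < ρ)
    (m : ℕ) :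
    ∮ z in C(0, r), H (g z) * deriv g z / g z ^ (m + 1)
      = 2 * π * I * (iteratedDeriv m H 0 / m.factorial) := by
  obtain ⟨R, hR, hHR⟩ :=
    hH.exists_eq_sum_add_pow_mul (hg0 ▸ hgS (mem_ball_self (hr.trans hrρ))) (m + 1)
  set a : ℕ → ℂ := fun i => iteratedDeriv i H 0 / i.factorial
  have hsph : ∀ z ∈ sphere (0 : ℂ) r, z ∈ ball (0 : ℂ) ρ ∧ g z ≠ 0 := fun z hz =>
    ⟨sphere_subset_ball hrρ hz, apply_ne_zero_of_dslope_ne_zero hg0 (ne_of_mem_sphere hz hr.ne')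
      (hu z (sphere_subset_ball hrρ hz))⟩
  have hsplit : EqOn (fun z => H (g z) * deriv g z / g z ^ (m + 1))
      (fun z => ∑ i ∈ Finset.range m, a i * (g z ^ ((i : ℤ) - (m + 1)) * deriv g z)
        + a m * (deriv g z / g z) + R (g z) * deriv g z) (sphere 0 r) := by
    intro z hz
    simp only [hHR (g z), smul_eq_mul, div_mul_eq_mul_div, mul_div_assoc]
    rw [← mul_div_assoc]
    exact sum_pow_mul_add_pow_mul_mul_div_pow (hsph z hz).2 a _ _ m
  have hregular : AnalyticOnNhd ℂ (fun z => R (g z) * deriv g z) (ball 0 ρ) :=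
    fun z hz => ((hR.comp hg hgS) z hz).mul (hg.deriv z hz)
  have hpole : ∀ i ∈ Finset.range m,
      CircleIntegrable (fun z => a i * (g z ^ ((i : ℤ) - (m + 1)) * deriv g z)) 0 r :=
    fun i _ => circleIntegrable_of_forall_analyticAt hr.le fun z hz => analyticAt_const.mul
      (((hg z (hsph z hz).1).zpow (hsph z hz).2).mul (hg.deriv z (hsph z hz).1))
  have hlog : CircleIntegrable (fun z => a m * (deriv g z / g z)) 0 r :=
    circleIntegrable_of_forall_analyticAt hr.le fun z hz => analyticAt_const.mul
      ((hg.deriv z (hsph z hz).1).div (hg z (hsph z hz).1) (hsph z hz).2)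
  rw [circleIntegral.integral_congr hr.le hsplit, circleIntegral.integral_add
      ((CircleIntegrable.fun_sum _ hpole).fun_add hlog)
      (circleIntegrable_of_forall_analyticAt hr.le fun z hz => hregular z (hsph z hz).1),
    circleIntegral.integral_add (CircleIntegrable.fun_sum _ hpole) hlog,
    circleIntegral.integral_fun_sum hpole, hregular.circleIntegral_eq_zero hr.le hrρ,
    circleIntegral.integral_const_mul, circleIntegral_deriv_div_self hg hg0 hu hr hrρ]
  rw [Finset.sum_eq_zero fun i hi => by
    rw [circleIntegral.integral_const_mul, circleIntegral_zpow_mul_deriv_eq_zero (by grind) hr.le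
      (fun z hz => (hg z (hsph z hz).1).differentiableAt) (fun z hz => (hsph z hz).2), mul_zero]]
  ring

end Residue

section Lagrange

variable {g G : ℂ → ℂ} {S : Set ℂ} {ρ : ℝ}

theorem deriv_comp_mul_deriv_eq_one_of_leftInvOn {U : Set ℂ} (hU : IsOpen U)
    (hg : ∀ z ∈ U, DifferentiableAt ℂ g z) (hG : ∀ z ∈ U, DifferentiableAt ℂ G (g z))
    (hGg : LeftInvOn G g U) {z : ℂ} (hz : z ∈ U) : deriv G (g z) * deriv g z = 1 := by
  have hid : G ∘ g =ᶠ[𝓝 z] id := by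
    filter_upwards [hU.mem_nhds hz] with w hw
    exact hGg hw
  rw [← ((hG z hz).hasDerivAt.comp z (hg z hz).hasDerivAt).deriv, hid.deriv_eq, deriv_id]

theorem dslope_ne_zero_of_leftInvOn (hg : AnalyticOnNhd ℂ g (ball 0 ρ)) (hg0 : g 0 = 0)
    (hG : AnalyticOnNhd ℂ G S) (hgS : MapsTo g (ball 0 ρ) S) (hGg : LeftInvOn G g (ball 0 ρ))
    {z : ℂ} (hz : z ∈ ball 0 ρ) : dslope g 0 z ≠ 0 := by
  rcases eq_or_ne z 0 with rfl | hz0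
  · rw [dslope_same]
    exact right_ne_zero_of_mul_eq_one (deriv_comp_mul_deriv_eq_one_of_leftInvOn isOpen_ball
      (fun w hw => (hg w hw).differentiableAt)
      (fun w hw => (hG _ (hgS hw)).differentiableAt) hGg hz)
  · intro hu
    have hgz : g z = g 0 := by rw [← mul_dslope_zero_eq_of_apply_zero hg0 z, hu, mul_zero, hg0]
    exact hz0 (by rw [← hGg hz, hgz, hGg (mem_ball_self (pos_of_mem_ball hz))])

/-- **Lagrange inversion**: `[z^m] (z / g z)^(m+1) = (m+1) [w^(m+1)] G` for the local inverse `G`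
of `g`. -/
theorem iteratedDeriv_inv_dslope_pow_eq_iteratedDeriv_succ (hρ : 0 < ρ)
    (hg : AnalyticOnNhd ℂ g (ball 0 ρ)) (hg0 : g 0 = 0) (hG : AnalyticOnNhd ℂ G S)
    (hgS : MapsTo g (ball 0 ρ) S) (hGg : LeftInvOn G g (ball 0 ρ)) (m : ℕ) :
    iteratedDeriv m (fun z => (dslope g 0 z)⁻¹ ^ (m + 1)) 0 = iteratedDeriv (m + 1) G 0 := by
  have hu := fun z (hz : z ∈ ball 0 ρ) => dslope_ne_zero_of_leftInvOn hg hg0 hG hgS hGg hz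
  have hΦ : AnalyticOnNhd ℂ (fun z => (dslope g 0 z)⁻¹ ^ (m + 1)) (ball 0 ρ) :=
    fun z hz => ((hg.dslope 0 z hz).inv (hu z hz)).pow _
  have hr : 0 < ρ / 2 := half_pos hρ
  have hrρ : ρ / 2 < ρ := half_lt_self hρ
  have hcauchy := (hΦ.differentiableOn.mono (closedBall_subset_ball hrρ)
    ).circleIntegral_one_div_sub_center_pow_smul hr m
  have hchain : EqOn (fun z => (1 / (z - 0) ^ (m + 1)) • (dslope g 0 z)⁻¹ ^ (m + 1))
      (fun z => deriv G (g z) * deriv g z / g z ^ (m + 1)) (sphere 0 (ρ / 2)) := by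
    intro z hz
    have hzρ := sphere_subset_ball hrρ hz
    simp only
    rw [deriv_comp_mul_deriv_eq_one_of_leftInvOn isOpen_ball
      (fun w hw => (hg w hw).differentiableAt) (fun w hw => (hG _ (hgS hw)).differentiableAt)
      hGg hzρ, ← mul_dslope_zero_eq_of_apply_zero hg0, smul_eq_mul, sub_zero, mul_pow]
    ring
  rw [circleIntegral.integral_congr hr.le hchain,
    circleIntegral_comp_mul_deriv_div_pow hg hg0 hu hG.deriv hgS hr hrρ m, smul_eq_mul] at hcauchy
  rw [iteratedDeriv_succ']
  rw [div_mul_eq_mul_div, mul_div_assoc] at hcauchy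
  exact (div_left_inj' (Nat.cast_ne_zero.2 m.factorial_ne_zero)).1
    (mul_left_cancel₀ two_pi_I_ne_zero hcauchy).symm

end Lagrange

theorem iteratedDeriv_re_ofReal {F : ℂ → ℂ} {s : Set ℂ} (hs : IsOpen s)
    (hF : AnalyticOnNhd ℂ F s) (k : ℕ) {x : ℝ} (hx : (x : ℂ) ∈ s) :
    iteratedDeriv k (fun y : ℝ => (F y).re) x = (iteratedDeriv k F x).re := by
  induction k generalizing x with
  | zero => simp
  | succ k ih =>
    have hev : iteratedDeriv k (fun y : ℝ => (F y).re) =ᶠ[𝓝 x]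
        fun y => (iteratedDeriv k F y).re := by
      filter_upwards [(hs.preimage continuous_ofReal).mem_nhds hx] with y hy using ih hy
    have hd : HasDerivAt (iteratedDeriv k F) (iteratedDeriv (k + 1) F x) x := by
      rw [iteratedDeriv_succ]
      exact ((iteratedDeriv_eq_iterate (f := F) ▸ hF.iterated_deriv k) x hx
        ).differentiableAt.hasDerivAt
    rw [iteratedDeriv_succ, hev.deriv_eq, hd.real_of_complex.deriv]

section OneSubCpow

theorem one_sub_mem_slitPlane_of_mem_ball {w : ℂ} (hw : w ∈ ball (0 : ℂ) 1) :
    1 - w ∈ slitPlane := by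
  simpa [sub_eq_add_neg] using mem_slitPlane_of_norm_lt_one (z := -w) (by simpa using hw)

theorem hasDerivAt_one_sub_cpow (c : ℂ) {w : ℂ} (hw : 1 - w ∈ slitPlane) :
    HasDerivAt (fun z => (1 - z) ^ c) (-(c * (1 - w) ^ (c - 1))) w := by
  simpa [mul_comm] using ((hasDerivAt_id w).const_sub 1).cpow_const (c := c) hw

theorem analyticOnNhd_one_sub_cpow (c : ℂ) :
    AnalyticOnNhd ℂ (fun z : ℂ => (1 - z) ^ c) (ball 0 1) := fun _ hw =>
  (analyticAt_const.sub analyticAt_id).cpow analyticAt_const (one_sub_mem_slitPlane_of_mem_ball hw)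

theorem iteratedDeriv_one_sub_cpow (c : ℂ) (k : ℕ) {w : ℂ} (hw : 1 - w ∈ slitPlane) :
    iteratedDeriv k (fun z => (1 - z) ^ c) w
      = (∏ i ∈ Finset.range k, ((i : ℂ) - c)) * (1 - w) ^ (c - k) := by
  induction k generalizing w with
  | zero => simp
  | succ k ih =>
    have hev : iteratedDeriv k (fun z => (1 - z) ^ c) =ᶠ[𝓝 w]
        fun z => (∏ i ∈ Finset.range k, ((i : ℂ) - c)) * (1 - z) ^ (c - k) := by
      filter_upwards [(isOpen_slitPlane.preimage (by fun_prop)).mem_nhds hw] with z hz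
      exact ih hz
    rw [iteratedDeriv_succ, hev.deriv_eq,
      ((hasDerivAt_one_sub_cpow (c - k) hw).const_mul _).deriv, Finset.prod_range_succ]
    rw [show c - (k : ℂ) - 1 = c - ((k + 1 : ℕ) : ℂ) by push_cast; ring]
    ring

end OneSubCpow

section Sibuya

variable {α : ℝ}

/-- The probability generating function of the Sibuya distribution. Its compositional inverse
near `0` is `sibuyaPGFInv α z = z / sibuyaPhi α z`. -/
noncomputable def sibuyaPGF (α : ℝ) (w : ℂ) : ℂ := 1 - (1 - w) ^ (α : ℂ)

noncomputable def sibuyaPGFInv (α : ℝ) (z : ℂ) : ℂ := 1 - (1 - z) ^ (α : ℂ)⁻¹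

theorem sibuyaPGFInv_zero (α : ℝ) : sibuyaPGFInv α 0 = 0 := by simp [sibuyaPGFInv]

theorem analyticOnNhd_sibuyaPGF (α : ℝ) : AnalyticOnNhd ℂ (sibuyaPGF α) (ball 0 1) :=
  fun w hw => analyticAt_const.sub (analyticOnNhd_one_sub_cpow _ w hw)

theorem analyticOnNhd_sibuyaPGFInv (α : ℝ) : AnalyticOnNhd ℂ (sibuyaPGFInv α) (ball 0 1) :=
  fun z hz => analyticAt_const.sub (analyticOnNhd_one_sub_cpow _ z hz)

theorem sibuyaPGF_sibuyaPGFInv (hα : 0 < α) {z : ℂ} (harg : |arg (1 - z)| < π * α) :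
    sibuyaPGF α (sibuyaPGFInv α z) = z := by
  have him : (log (1 - z) * (α : ℂ)⁻¹).im = arg (1 - z) / α := by
    rw [← ofReal_inv, mul_im, ofReal_re, ofReal_im, log_im, mul_zero, zero_add, div_eq_mul_inv]
  rw [abs_lt, ← neg_mul, ← lt_div_iff₀ hα, ← div_lt_iff₀ hα] at harg
  rw [sibuyaPGF, sibuyaPGFInv, sub_sub_cancel,
    ← cpow_mul _ (him ▸ harg.1) (him ▸ harg.2.le),
    inv_mul_cancel₀ (ofReal_ne_zero.2 hα.ne'), cpow_one, sub_sub_cancel]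

theorem exists_ball_mapsTo_leftInvOn_sibuyaPGFInv (hα : 0 < α) :
    ∃ ρ, 0 < ρ ∧ ρ ≤ 1 ∧ MapsTo (sibuyaPGFInv α) (ball 0 ρ) (ball 0 1) ∧
      LeftInvOn (sibuyaPGF α) (sibuyaPGFInv α) (ball 0 ρ) := by
  have hmaps : ∀ᶠ z in 𝓝 0, sibuyaPGFInv α z ∈ ball (0 : ℂ) 1 := by
    have hc := (analyticOnNhd_sibuyaPGFInv α 0 (mem_ball_self one_pos)).continuousAt
    rw [ContinuousAt, sibuyaPGFInv_zero] at hc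
    exact hc.eventually (ball_mem_nhds 0 one_pos)
  have harg : ∀ᶠ z in 𝓝 (0 : ℂ), |arg (1 - z)| < π * α := by
    have hc : ContinuousAt (fun z : ℂ => arg (1 - z)) 0 :=
      (continuousAt_arg (by simp [one_mem_slitPlane])).comp (by fun_prop)
    exact hc.eventually_mem ((isOpen_lt continuous_abs continuous_const).mem_nhds
      (by simpa using mul_pos Real.pi_pos hα))
  obtain ⟨ε, hε, hP⟩ := Metric.eventually_nhds_iff_ball.1 (hmaps.and harg)
  have hsub : ball (0 : ℂ) (min ε 1) ⊆ ball 0 ε := ball_subset_ball (min_le_left _ _)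
  exact ⟨min ε 1, lt_min hε one_pos, min_le_right _ _, fun z hz => (hP z (hsub hz)).1,
    fun z hz => sibuyaPGF_sibuyaPGFInv hα (hP z (hsub hz)).2⟩

theorem iteratedDeriv_succ_sibuyaPGF_zero (α : ℝ) (m : ℕ) :
    iteratedDeriv (m + 1) (sibuyaPGF α) 0 = ((α * riseFact (1 - α) m : ℝ) : ℂ) := by
  rw [show sibuyaPGF α = fun w => 1 - (1 - w) ^ (α : ℂ) from rfl,
    iteratedDeriv_const_sub m.succ_pos, iteratedDeriv_neg,
    iteratedDeriv_one_sub_cpow _ _ (by simp [one_mem_slitPlane]), Finset.prod_range_succ',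
    riseFact, ofReal_mul, ofReal_prod]
  simp only [sub_zero, one_cpow, mul_one, Nat.cast_zero, zero_sub]
  rw [mul_neg, neg_neg, mul_comm]
  push_cast
  exact congrArg _ (Finset.prod_congr rfl fun i _ => by ring)

theorem dslope_sibuyaPGFInv_ofReal {x : ℝ} (hx : x < 1) :
    dslope (sibuyaPGFInv α) 0 x = ((sibuyaPhi α x)⁻¹ : ℝ) := by
  rcases eq_or_ne x 0 with rfl | hx0
  · rw [ofReal_zero, dslope_same,
      show sibuyaPGFInv α = fun z => 1 - (1 - z) ^ (α : ℂ)⁻¹ from rfl, ((hasDerivAt_one_sub_cpow _ (by simp [one_mem_slitPlane])).const_sub 1).deriv]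
    simp [sibuyaPhi]
  · rw [dslope_of_ne _ (ofReal_ne_zero.2 hx0), slope_def_field, sibuyaPGFInv_zero, sub_zero,
      sub_zero, sibuyaPhi, if_neg hx0, inv_div, sibuyaPGFInv, ← ofReal_one, ← ofReal_sub,
      ← ofReal_inv, ← ofReal_cpow (by linarith)]
    push_cast
    rw [one_div]

end Sibuya

/-- (1/n)·[z^{n-1}]φ(z)^n = α·[1-α]_{n-1}/n!. -/
theorem sibuya_lagrange_tree (α : ℝ) (hα : α ∈ Set.Ioo (0:ℝ) 1)
    (n : ℕ) (hn : 1 ≤ n) :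
    (1 / (n : ℝ)) * taylorCoeff (fun z => (sibuyaPhi α z) ^ n) (n - 1)
      = α * riseFact (1 - α) (n - 1) / n.factorial := by
  obtain ⟨m, rfl⟩ : ∃ m, n = m + 1 := ⟨n - 1, by omega⟩
  obtain ⟨ρ, hρ, hρ1, hmaps, hinv⟩ := exists_ball_mapsTo_leftInvOn_sibuyaPGFInv hα.1
  have hg := (analyticOnNhd_sibuyaPGFInv α).mono (ball_subset_ball hρ1)
  have hΦ : AnalyticOnNhd ℂ (fun z => (dslope (sibuyaPGFInv α) 0 z)⁻¹ ^ (m + 1)) (ball 0 ρ) :=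
    fun z hz => ((hg.dslope 0 z hz).inv (dslope_ne_zero_of_leftInvOn hg (sibuyaPGFInv_zero α)
      (analyticOnNhd_sibuyaPGF α) hmaps hinv hz)).pow _
  have hre : (fun x : ℝ => sibuyaPhi α x ^ (m + 1)) =ᶠ[𝓝 0]
      fun x => ((dslope (sibuyaPGFInv α) 0 x)⁻¹ ^ (m + 1)).re := by
    filter_upwards [Iio_mem_nhds one_pos] with x hx
    rw [dslope_sibuyaPGFInv_ofReal hx, ← ofReal_inv, inv_inv, ← ofReal_pow, ofReal_re]
  rw [Nat.add_sub_cancel, taylorCoeff, hre.iteratedDeriv_eq,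
    iteratedDeriv_re_ofReal isOpen_ball hΦ m (by simpa using hρ), ofReal_zero,
    iteratedDeriv_inv_dslope_pow_eq_iteratedDeriv_succ hρ hg (sibuyaPGFInv_zero α)
      (analyticOnNhd_sibuyaPGF α) hmaps hinv m,
    iteratedDeriv_succ_sibuyaPGF_zero, ofReal_re, Nat.factorial_succ]
  push_cast
  field_simp
end

section
/- For α ∈ (0,1) and fixed λ ≥ 0, the Laplace-transform limit (1 - (1 - e^{-λ k^{-1/α}})^α)^k → e^{-λ^α} as k → ∞. -/
/-!
Since `1 - exp (-u) ~ u` as `u → 0`, substituting `x = k ^ (1/α)` gives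
`k * (1 - exp (-λ k ^ (-1/α))) ^ α = (x * (1 - exp (-λ / x))) ^ α → λ ^ α`,
and `(1 - a k) ^ k → exp (-L)` whenever `k * a k → L`.
-/

open Filter Real Topology

theorem Real.tendsto_mul_one_sub_exp_neg_mul_inv_atTop (c : ℝ) :
    Tendsto (fun x : ℝ => x * (1 - exp (-c * x⁻¹))) atTop (𝓝 c) := by
  have hderiv : HasDerivAt (fun u : ℝ => 1 - exp (-c * u)) c 0 := by
    simpa using ((hasDerivAt_id (0 : ℝ)).const_mul (-c)).exp.const_sub 1
  have hinv : Tendsto (fun x : ℝ => x⁻¹) atTop (𝓝[≠] 0) :=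
    tendsto_inv_atTop_nhdsGT_zero.mono_right (nhdsWithin_mono _ fun _ hx => ne_of_gt hx)
  -- the expression is the difference quotient of `hderiv` between `0` and `x⁻¹`
  refine (hderiv.tendsto_slope.comp hinv).congr fun x => ?_
  simp [slope_def_field, mul_comm]

theorem Real.tendsto_natCast_mul_one_sub_exp_neg_mul_rpow {α c : ℝ} (hα : 0 < α) (hc : 0 ≤ c) :
    Tendsto (fun k : ℕ => (k : ℝ) * (1 - exp (-c * (k : ℝ) ^ (-1 / α))) ^ α)
      atTop (𝓝 (c ^ α)) := by
  have hroot : Tendsto (fun k : ℕ => (k : ℝ) ^ (1 / α)) atTop atTop :=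
    (tendsto_rpow_atTop (by positivity)).comp tendsto_natCast_atTop_atTop
  refine (((tendsto_mul_one_sub_exp_neg_mul_inv_atTop c).comp hroot).rpow_const
    (Or.inr hα.le)).congr fun k => ?_
  have hk : (0 : ℝ) ≤ k := k.cast_nonneg
  have hinv : ((k : ℝ) ^ (1 / α))⁻¹ = (k : ℝ) ^ (-1 / α) := by
    rw [← rpow_neg hk, neg_div]
  have hexp : 0 ≤ 1 - exp (-c * (k : ℝ) ^ (-1 / α)) := by
    rw [sub_nonneg, exp_le_one_iff, neg_mul, neg_nonpos]
    positivity
  rw [Function.comp_apply, hinv, mul_rpow (by positivity) hexp, ← rpow_mul hk,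
    one_div_mul_cancel hα.ne', rpow_one]

/-- for α ∈ (0,1) and λ ≥ 0,
(1 - (1 - e^{-λ k^{-1/α}})^α)^k → e^{-λ^α} as k → ∞. -/
theorem sibuya_stable_limit (α : ℝ) (hα : α ∈ Set.Ioo (0:ℝ) 1)
    (lam : ℝ) (hlam : 0 ≤ lam) :
    Filter.Tendsto
      (fun k : ℕ =>
        (1 - (1 - Real.exp (-lam * (k : ℝ) ^ (-1/α))) ^ α) ^ k)
      Filter.atTop (nhds (Real.exp (-lam ^ α))) := by
  have hlin := (tendsto_natCast_mul_one_sub_exp_neg_mul_rpow hα.1 hlam).neg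
  simp only [← mul_neg] at hlin
  simpa only [sub_eq_add_neg] using tendsto_one_add_pow_exp_of_tendsto hlin
end

section
/- The function Ψ(z) = αz(1-z)^{-(1-α)}/(1-(1-z)^α) is strictly increasing on (0,1), with Ψ(z) → ∞ as z → 1⁻, so that for every ρ > 1 there exists a unique z_ρ ∈ (0,1) with Ψ(z_ρ) = ρ. -/
/-!
With `u = 1 - z` and `β = 1 - α` one has `Ψ(z) = α / (1 - s(u))`, where
`s(u) = (1 - u^β) / (1 - u)` is the slope of the chord of the strictly concave function `u ↦ u^β`
between `u` and `1`. Chord slopes of a strictly concave function decrease, so `Ψ` is strictly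
increasing; `s(u) → s(0) = 1` as `u → 0⁺` makes `Ψ` blow up at `z = 1`, and `s(u) → β` (the
derivative at `1`) as `u → 1⁻` gives `Ψ → 1` at `z = 0`. The intermediate value theorem then
reaches every `ρ > 1`, exactly once by strict monotonicity.
-/

open Real Set Filter Topology

section ConstSub

variable {G : Type*} [AddCommGroup G] [LinearOrder G] [IsOrderedAddMonoid G] [TopologicalSpace G]
  [OrderTopology G]

lemma tendsto_const_sub_nhdsLT (a b : G) : Tendsto (a - ·) (𝓝[<] b) (𝓝[>] (a - b)) :=
  tendsto_nhdsWithin_iff.2 ⟨((continuous_sub_left a).tendsto b).mono_left nhdsWithin_le_nhds,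
    eventually_nhdsWithin_of_forall fun _ hz => sub_lt_sub_left hz a⟩

lemma tendsto_const_sub_nhdsGT (a b : G) : Tendsto (a - ·) (𝓝[>] b) (𝓝[<] (a - b)) :=
  tendsto_nhdsWithin_iff.2 ⟨((continuous_sub_left a).tendsto b).mono_left nhdsWithin_le_nhds,
    eventually_nhdsWithin_of_forall fun _ hz => sub_lt_sub_left hz a⟩

end ConstSub

section RpowSlope

variable {β : ℝ}

lemma strictAntiOn_slope_rpow_one (hβ0 : 0 < β) (hβ1 : β < 1) :
    StrictAntiOn (slope (fun u : ℝ => u ^ β) 1) (Ico 0 1) := by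
  intro x hx y hy hxy
  simp only [slope_def_field]
  exact (strictConcaveOn_rpow hβ0 hβ1).secant_strict_mono (by simp) hx.1 hy.1 hx.2.ne hy.2.ne hxy

lemma slope_rpow_one_lt_one (hβ0 : 0 < β) (hβ1 : β < 1) {u : ℝ} (hu : u ∈ Ioo 0 1) :
    slope (fun u : ℝ => u ^ β) 1 u < 1 := by
  have h0 : slope (fun u : ℝ => u ^ β) 1 (0 : ℝ) = 1 := by
    simp [slope_def_field, zero_rpow hβ0.ne']
  exact (strictAntiOn_slope_rpow_one hβ0 hβ1 ⟨le_rfl, one_pos⟩ (Ioo_subset_Ico_self hu)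
    hu.1).trans_eq h0

lemma tendsto_slope_rpow_one_nhdsGT_zero (hβ0 : 0 < β) :
    Tendsto (slope (fun u : ℝ => u ^ β) 1) (𝓝[>] 0) (𝓝 1) := by
  have hcont : ContinuousAt (slope (fun u : ℝ => u ^ β) 1) 0 := by
    rw [show slope (fun u : ℝ => u ^ β) 1 = fun u => (u ^ β - 1 ^ β) / (u - 1) from
      funext fun u => slope_def_field _ _ _]
    exact ((continuousAt_id.rpow_const (Or.inr hβ0.le)).sub continuousAt_const).div
      (continuousAt_id.sub continuousAt_const) (by norm_num)
  simpa [slope_def_field, zero_rpow hβ0.ne'] using hcont.tendsto.mono_left nhdsWithin_le_nhds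

lemma tendsto_slope_rpow_one_nhdsLT_one :
    Tendsto (slope (fun u : ℝ => u ^ β) 1) (𝓝[<] 1) (𝓝 β) := by
  simpa using (hasDerivAt_rpow_const (x := 1) (p := β) (Or.inl one_ne_zero)).tendsto_slope.mono_left
    (nhdsLT_le_nhdsNE 1)

end RpowSlope

noncomputable def sibuyaPsi (α z : ℝ) : ℝ := α * z * (1 - z) ^ (α - 1) / (1 - (1 - z) ^ α)

section SibuyaPsi

variable {α : ℝ}

lemma sibuyaPsi_eq_div_one_sub_slope (hα : 0 < α) {z : ℝ} (hz : z ∈ Ioo 0 1) :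
    sibuyaPsi α z = α / (1 - slope (fun u : ℝ => u ^ (1 - α)) 1 (1 - z)) := by
  have hu : 0 < 1 - z := by linarith [hz.2]
  have hw : 0 < (1 - z) ^ α := rpow_pos_of_pos hu α
  have hw1 : (1 - z) ^ α < 1 := rpow_lt_one hu.le (by linarith [hz.1]) hα
  rw [sibuyaPsi, slope_def_field, rpow_sub_one hu.ne', rpow_sub hu, rpow_one, one_rpow]
  generalize (1 - z) ^ α = w at *
  have hz0 : z ≠ 0 := hz.1.ne'
  have hw1' : 1 - w ≠ 0 := by linarith
  rw [sub_sub_cancel_left,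
    show 1 - ((1 - z) / w - 1) / -z = (1 - z) * (1 - w) / (z * w) by field_simp; ring]
  field_simp

lemma continuousOn_sibuyaPsi (hα : 0 < α) : ContinuousOn (sibuyaPsi α) (Ioo 0 1) := by
  intro z hz
  have hu : 0 < 1 - z := by linarith [hz.2]
  have hden : 1 - (1 - z) ^ α ≠ 0 := (sub_pos.2 (rpow_lt_one hu.le (by linarith [hz.1]) hα)).ne'
  refine ContinuousAt.continuousWithinAt ?_
  unfold sibuyaPsi
  fun_prop (disch := first | assumption | exact Or.inl hu.ne')

lemma sibuyaPsi_strictMonoOn (hα0 : 0 < α) (hα1 : α < 1) :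
    StrictMonoOn (sibuyaPsi α) (Ioo 0 1) := by
  intro x hx y hy hxy
  have hux : 1 - x ∈ Ioo 0 1 := ⟨by linarith [hx.2], by linarith [hx.1]⟩
  have huy : 1 - y ∈ Ioo 0 1 := ⟨by linarith [hy.2], by linarith [hy.1]⟩
  have hβ0 : 0 < 1 - α := by linarith
  rw [sibuyaPsi_eq_div_one_sub_slope hα0 hx, sibuyaPsi_eq_div_one_sub_slope hα0 hy]
  refine div_lt_div_of_pos_left hα0 (sub_pos.2 (slope_rpow_one_lt_one hβ0 (by linarith) huy)) ?_
  exact sub_lt_sub_left (strictAntiOn_slope_rpow_one hβ0 (by linarith)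
    (Ioo_subset_Ico_self huy) (Ioo_subset_Ico_self hux) (by linarith)) 1

lemma tendsto_sibuyaPsi_nhdsLT_one (hα0 : 0 < α) (hα1 : α < 1) :
    Tendsto (sibuyaPsi α) (𝓝[<] 1) atTop := by
  have hβ0 : 0 < 1 - α := by linarith
  have hu : Tendsto (1 - ·) (𝓝[<] (1 : ℝ)) (𝓝[>] 0) := by
    simpa using tendsto_const_sub_nhdsLT (1 : ℝ) 1
  have hden : Tendsto (fun z => 1 - slope (fun u : ℝ => u ^ (1 - α)) 1 (1 - z)) (𝓝[<] 1)
      (𝓝[>] 0) := by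
    refine tendsto_nhdsWithin_iff.2 ⟨?_, ?_⟩
    · simpa using (((tendsto_slope_rpow_one_nhdsGT_zero hβ0).comp hu).const_sub 1)
    · filter_upwards [hu.eventually (Ioo_mem_nhdsGT one_pos)] with z hz
      exact sub_pos.2 (slope_rpow_one_lt_one hβ0 (by linarith) hz)
  refine (hden.inv_tendsto_nhdsGT_zero.const_mul_atTop hα0).congr' ?_
  filter_upwards [Ioo_mem_nhdsLT one_pos] with z hz
  exact (sibuyaPsi_eq_div_one_sub_slope hα0 hz).symm

lemma tendsto_sibuyaPsi_nhdsGT_zero (hα0 : 0 < α) :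
    Tendsto (sibuyaPsi α) (𝓝[>] 0) (𝓝 1) := by
  have hu : Tendsto (1 - ·) (𝓝[>] (0 : ℝ)) (𝓝[<] 1) := by
    simpa using tendsto_const_sub_nhdsGT (1 : ℝ) 0
  have hden : Tendsto (fun z => 1 - slope (fun u : ℝ => u ^ (1 - α)) 1 (1 - z)) (𝓝[>] 0)
      (𝓝 α) := by
    simpa using ((tendsto_slope_rpow_one_nhdsLT_one (β := 1 - α)).comp hu).const_sub 1
  rw [← div_self hα0.ne']
  refine (tendsto_const_nhds.div hden hα0.ne').congr' ?_
  filter_upwards [Ioo_mem_nhdsGT one_pos] with z hz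
  exact (sibuyaPsi_eq_div_one_sub_slope hα0 hz).symm

lemma Ioi_one_subset_image_sibuyaPsi (hα0 : 0 < α) (hα1 : α < 1) :
    Ioi 1 ⊆ sibuyaPsi α '' Ioo 0 1 :=
  isPreconnected_Ioo.intermediate_value_Ioi (le_principal_iff.2 (Ioo_mem_nhdsGT one_pos))
    (le_principal_iff.2 (Ioo_mem_nhdsLT one_pos)) (continuousOn_sibuyaPsi hα0)
    (tendsto_sibuyaPsi_nhdsGT_zero hα0) (tendsto_sibuyaPsi_nhdsLT_one hα0 hα1)

end SibuyaPsi

/-- Ψ(z) = αz(1-z)^{α-1}/(1-(1-z)^α) is strictly increasing on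
(0,1), tends to ∞ as z → 1⁻, and for every ρ > 1 there is a unique
z_ρ ∈ (0,1) with Ψ(z_ρ) = ρ. -/
theorem sibuya_saddle_point (α : ℝ) (hα : α ∈ Set.Ioo (0:ℝ) 1)
    (Ψ : ℝ → ℝ)
    (hΨ : ∀ z, Ψ z = α * z * (1 - z) ^ (α - 1) / (1 - (1 - z) ^ α)) :
    StrictMonoOn Ψ (Set.Ioo (0:ℝ) 1) ∧
    Filter.Tendsto Ψ (nhdsWithin 1 (Set.Iio (1:ℝ))) Filter.atTop ∧
    ∀ ρ : ℝ, 1 < ρ → ∃! z, z ∈ Set.Ioo (0:ℝ) 1 ∧ Ψ z = ρ := by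
  obtain ⟨hα0, hα1⟩ := hα
  obtain rfl : Ψ = sibuyaPsi α := funext hΨ
  have hmono := sibuyaPsi_strictMonoOn hα0 hα1
  refine ⟨hmono, tendsto_sibuyaPsi_nhdsLT_one hα0 hα1, fun ρ hρ => ?_⟩
  obtain ⟨z, hz, rfl⟩ := Ioi_one_subset_image_sibuyaPsi hα0 hα1 hρ
  exact ⟨z, ⟨hz, rfl⟩, fun y hy => hmono.injOn hy.1 hz hy.2⟩
end

section
/- The Sibuya polynomials s_n(u) := n!·[z^n](1/(1-u(1-(1-z)^α))) satisfy the difference-differential recursion s_{n+1}(u) = (n+αu)s_n(u) + αu(u-1)s_n'(u) with s_0(u)=1, and consequently s_n(1) = [α]_n. -/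
/-- `𝒞_{n,k} = n!·[z^n](1-(1-z)^α)^k`. -/
noncomputable def sibuyaC (α : ℝ) (n k : ℕ) : ℝ :=
  n.factorial * taylorCoeff (fun z => (1 - (1 - z) ^ α) ^ k) n

/-- The Sibuya polynomial `s_n(u) = ∑_{k=0}^n 𝒞_{n,k} u^k`. -/
noncomputable def sibuyaPoly (α : ℝ) (n : ℕ) (u : ℝ) : ℝ :=
  ∑ k ∈ Finset.range (n + 1), sibuyaC α n k * u ^ k

open Finset Topology

lemma iteratedDeriv_one_sub_rpow (r z : ℝ) (n : ℕ) :
    iteratedDeriv n (fun z : ℝ => (1 - z) ^ r) z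
      = (-1) ^ n * (descPochhammer ℝ n).eval r * (1 - z) ^ (r - n) := by
  simp only [iteratedDeriv_comp_const_sub (f := fun x : ℝ => x ^ r), smul_eq_mul,
    iteratedDeriv_eq_iterate, Real.iter_deriv_rpow_const, mul_assoc]

lemma contDiffAt_one_sub_rpow (r : ℝ) (n : ℕ) {z : ℝ} (hz : z ≠ 1) :
    ContDiffAt ℝ n (fun z : ℝ => (1 - z) ^ r) z :=
  (Real.contDiffAt_rpow_const (Or.inl (sub_ne_zero.mpr hz.symm))).comp z
    (by fun_prop : ContDiffAt ℝ n (fun z : ℝ => 1 - z) z)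

-- Only near `z = 0`: for `1 - z < 0`, `((1 - z) ^ α) ^ j ≠ (1 - z) ^ (α * j)` in general.
lemma one_sub_one_sub_rpow_pow_eventuallyEq (α : ℝ) (k : ℕ) :
    (fun z : ℝ => (1 - (1 - z) ^ α) ^ k) =ᶠ[𝓝 0]
      fun z => ∑ j ∈ range (k + 1), (-1) ^ j * (k.choose j : ℝ) * (1 - z) ^ (α * j) := by
  filter_upwards [Iio_mem_nhds (show (0 : ℝ) < 1 by norm_num)] with z hz
  have hz : 0 ≤ 1 - z := by rw [Set.mem_Iio] at hz; linarith
  rw [sub_eq_neg_add, add_pow]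
  refine sum_congr rfl fun j _ => ?_
  rw [Real.rpow_mul hz, Real.rpow_natCast, one_pow, neg_pow]
  ring

-- `(-1) ^ k` times the `k`-th forward difference of `g` at `0`.
def altChooseSum {R : Type*} [CommRing R] (g : ℕ → R) (k : ℕ) : R :=
  ∑ j ∈ range (k + 1), (-1) ^ j * (k.choose j : R) * g j

lemma sibuyaC_eq_altChooseSum (α : ℝ) (n k : ℕ) :
    sibuyaC α n k = (-1) ^ n * altChooseSum (fun j => (descPochhammer ℝ n).eval (α * j)) k := by
  have hfac : (n.factorial : ℝ) ≠ 0 := by positivity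
  rw [sibuyaC, taylorCoeff, mul_div_cancel₀ _ hfac,
    (one_sub_one_sub_rpow_pow_eventuallyEq α k).iteratedDeriv_eq,
    iteratedDeriv_fun_sum fun j _ => contDiffAt_const.mul (contDiffAt_one_sub_rpow _ n zero_ne_one),
    altChooseSum, mul_sum]
  refine sum_congr rfl fun j _ => ?_
  rw [iteratedDeriv_const_mul_field, iteratedDeriv_one_sub_rpow, sub_zero, Real.one_rpow]
  ring

lemma altChooseSum_natCast_mul {R : Type*} [CommRing R] (g : ℕ → R) (k : ℕ) :
    altChooseSum (fun j => (j : R) * g j) (k + 1)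
      = (k + 1) * (altChooseSum g (k + 1) - altChooseSum g k) := by
  have hk : altChooseSum g k = ∑ j ∈ range (k + 2), (-1) ^ j * (k.choose j : R) * g j := by
    rw [altChooseSum, sum_range_succ _ (k + 1), Nat.choose_succ_self]
    simp
  rw [hk, altChooseSum, altChooseSum, ← sum_sub_distrib, mul_sum]
  refine sum_congr rfl fun j hj => ?_
  have hj : j ≤ k + 1 := Nat.lt_succ_iff.mp (mem_range.mp hj)
  have h := congrArg (Nat.cast (R := R)) (Nat.choose_mul_succ_eq k j)
  push_cast [Nat.cast_sub hj] at h
  linear_combination (-1) ^ j * g j * h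

lemma sibuyaC_succ_succ (α : ℝ) (n k : ℕ) :
    sibuyaC α (n + 1) (k + 1)
      = (n - α * (k + 1)) * sibuyaC α n (k + 1) + α * (k + 1) * sibuyaC α n k := by
  set P : ℕ → ℝ := fun j => (descPochhammer ℝ n).eval (α * j)
  have hP : (fun j : ℕ => (descPochhammer ℝ (n + 1)).eval (α * j))
      = fun j : ℕ => α * ((j : ℝ) * P j) - n * P j := by
    ext j; rw [descPochhammer_succ_eval]; ring
  have hlin : altChooseSum (fun j : ℕ => α * ((j : ℝ) * P j) - n * P j) (k + 1)
      = α * altChooseSum (fun j => (j : ℝ) * P j) (k + 1) - n * altChooseSum P (k + 1) := by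
    simp only [altChooseSum, mul_sum, ← sum_sub_distrib]
    exact sum_congr rfl fun j _ => by ring
  simp only [sibuyaC_eq_altChooseSum, hP, hlin, altChooseSum_natCast_mul]
  ring

lemma sibuyaC_zero_right (α : ℝ) (n : ℕ) : sibuyaC α n 0 = if n = 0 then 1 else 0 := by
  cases n <;> simp [sibuyaC_eq_altChooseSum, altChooseSum]

lemma sibuyaC_eq_zero_of_lt (α : ℝ) {n k : ℕ} (h : n < k) : sibuyaC α n k = 0 := by
  induction n generalizing k with
  | zero =>
    simp [sibuyaC, taylorCoeff, zero_pow h.ne']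
  | succ n ih =>
    obtain ⟨k, rfl⟩ := Nat.exists_eq_add_one.mpr (Nat.zero_lt_of_lt h)
    rw [sibuyaC_succ_succ, ih (by omega), ih (by omega)]
    ring

lemma sibuyaC_succ (α : ℝ) (n k : ℕ) :
    sibuyaC α (n + 1) k = (n - α * k) * sibuyaC α n k + α * k * sibuyaC α n (k - 1) := by
  cases k with
  | zero => rcases eq_or_ne n 0 with h | h <;> simp [sibuyaC_zero_right, h]
  | succ k => push_cast; exact sibuyaC_succ_succ α n k

lemma hasDerivAt_sibuyaPoly (α : ℝ) (n : ℕ) (u : ℝ) :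
    HasDerivAt (sibuyaPoly α n) (∑ k ∈ range (n + 1), sibuyaC α n k * (k * u ^ (k - 1))) u := by
  unfold sibuyaPoly
  exact HasDerivAt.fun_sum fun k _ => (hasDerivAt_pow k u).const_mul _

lemma sibuyaPoly_succ (α : ℝ) (n : ℕ) (u : ℝ) :
    sibuyaPoly α (n + 1) u
      = (n + α * u) * sibuyaPoly α n u + α * u * (u - 1) * deriv (sibuyaPoly α n) u := by
  have hterm (k : ℕ) :
      (n + α * u) * (sibuyaC α n k * u ^ k) + α * u * (u - 1) * (sibuyaC α n k * (k * u ^ (k - 1)))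
        = (n - α * k) * sibuyaC α n k * u ^ k + α * (k + 1) * sibuyaC α n k * u ^ (k + 1) := by
    cases k <;> push_cast <;> ring
  have hlow : ∑ k ∈ range (n + 1), (n - α * k) * sibuyaC α n k * u ^ k
      = ∑ k ∈ range (n + 2), (n - α * k) * sibuyaC α n k * u ^ k := by
    rw [sum_range_succ _ (n + 1), sibuyaC_eq_zero_of_lt α (Nat.lt_succ_self n)]
    simp
  have hhigh : ∑ k ∈ range (n + 1), α * (k + 1) * sibuyaC α n k * u ^ (k + 1)
      = ∑ k ∈ range (n + 2), α * k * sibuyaC α n (k - 1) * u ^ k := by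
    rw [sum_range_succ' _ (n + 1)]
    simp
  rw [(hasDerivAt_sibuyaPoly α n u).deriv, sibuyaPoly, sibuyaPoly, mul_sum, mul_sum,
    ← sum_add_distrib]
  simp_rw [hterm]
  rw [sum_add_distrib, hlow, hhigh, ← sum_add_distrib]
  exact sum_congr rfl fun k _ => by rw [sibuyaC_succ]; ring

lemma sibuyaPoly_zero (α u : ℝ) : sibuyaPoly α 0 u = 1 := by
  simp [sibuyaPoly, sibuyaC_zero_right]

lemma sibuyaPoly_one (α : ℝ) (n : ℕ) : sibuyaPoly α n 1 = riseFact α n := by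
  induction n with
  | zero => simp [sibuyaPoly_zero, riseFact]
  | succ n ih => rw [sibuyaPoly_succ, ih, riseFact, riseFact, prod_range_succ]; ring

theorem sibuya_polynomials_recursion_general (α : ℝ) :
    (∀ u : ℝ, sibuyaPoly α 0 u = 1) ∧
    (∀ n : ℕ, ∀ u : ℝ,
      sibuyaPoly α (n + 1) u
        = ((n : ℝ) + α * u) * sibuyaPoly α n u
          + α * u * (u - 1) * deriv (sibuyaPoly α n) u) ∧
    (∀ n : ℕ, sibuyaPoly α n 1 = riseFact α n) :=
  ⟨sibuyaPoly_zero α, sibuyaPoly_succ α, sibuyaPoly_one α⟩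

/-- the Sibuya polynomials satisfy
s_{n+1}(u) = (n+αu)s_n(u) + αu(u-1)s_n'(u), s_0(u) = 1, and s_n(1) = [α]_n. -/
theorem sibuya_polynomials_recursion (α : ℝ) (hα : α ∈ Set.Ioo (0:ℝ) 1) :
    (∀ u : ℝ, sibuyaPoly α 0 u = 1) ∧
    (∀ n : ℕ, ∀ u : ℝ,
      sibuyaPoly α (n + 1) u
        = ((n : ℝ) + α * u) * sibuyaPoly α n u
          + α * u * (u - 1) * deriv (sibuyaPoly α n) u) ∧
    (∀ n : ℕ, sibuyaPoly α n 1 = riseFact α n) :=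
  sibuya_polynomials_recursion_general α
end
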